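/- arXiv:2506.02557 — 2 statements merged into one kernel-verified Lean document; each statement's English description precedes it below -/
import Mathlib

section
/- Let E be a real inner product space, let u₀, u, v ∈ E be nonzero vectors, and let λ ≥ 0. If ‖u − u₀‖ ≤ λ, then |⟪u₀, v⟫/(‖u₀‖·‖v‖) − ⟪u, v⟫/(‖u‖·‖v‖)| ≤ 2λ / max(‖u‖, ‖u₀‖). -/
/-!
Cosine similarity with `v` is the inner product of the normalized vector with `v / ‖v‖`, so by
Cauchy–Schwarz it moves by at most the distance between the normalized vectors. That distance is
controlled by writing `normalize x - normalize y = ‖x‖⁻¹ • ((x - y) + (‖y‖ - ‖x‖) • normalize y)`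
and bounding `|‖y‖ - ‖x‖|` by `‖x - y‖`; using the longer of the two vectors in the role of `x`
gives the denominator `max ‖x‖ ‖y‖`.
-/

open RealInnerProductSpace

theorem abs_real_inner_div_norm_le_norm {F : Type*} [NormedAddCommGroup F]
    [InnerProductSpace ℝ F] (x y : F) : |⟪x, y⟫ / ‖y‖| ≤ ‖x‖ := by
  rw [abs_div, abs_norm]
  exact div_le_of_le_mul₀ (norm_nonneg y) (norm_nonneg x) (abs_real_inner_le_norm x y)

namespace NormedSpace

variable {V : Type*} [NormedAddCommGroup V] [NormedSpace ℝ V]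

theorem norm_normalize_le_one (x : V) : ‖normalize x‖ ≤ 1 := by
  rcases eq_or_ne x 0 with rfl | hx
  · simp
  · exact (norm_normalize hx).le

theorem normalize_sub_normalize_eq {x : V} (hx : x ≠ 0) (y : V) :
    normalize x - normalize y = ‖x‖⁻¹ • ((x - y) + (‖y‖ - ‖x‖) • normalize y) := by
  have hx' : ‖x‖⁻¹ * ‖x‖ = 1 := inv_mul_cancel₀ (norm_ne_zero_iff.mpr hx)
  rw [show normalize x = ‖x‖⁻¹ • x from rfl]
  linear_combination (norm := module) -‖x‖⁻¹ • norm_smul_normalize y + hx' • normalize y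

theorem norm_normalize_sub_normalize_le_div_norm {x : V} (hx : x ≠ 0) (y : V) :
    ‖normalize x - normalize y‖ ≤ 2 * ‖x - y‖ / ‖x‖ := by
  have hscale : ‖(‖y‖ - ‖x‖) • normalize y‖ ≤ ‖x - y‖ :=
    calc ‖(‖y‖ - ‖x‖) • normalize y‖ = |‖x‖ - ‖y‖| * ‖normalize y‖ := by
          rw [norm_smul, Real.norm_eq_abs, abs_sub_comm]
      _ ≤ ‖x - y‖ * 1 := by
          gcongr
          exacts [abs_norm_sub_norm_le x y, norm_normalize_le_one y]
      _ = ‖x - y‖ := mul_one _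
  calc ‖normalize x - normalize y‖ = ‖(x - y) + (‖y‖ - ‖x‖) • normalize y‖ / ‖x‖ := by
        rw [normalize_sub_normalize_eq hx, norm_smul, norm_inv, norm_norm, inv_mul_eq_div]
    _ ≤ (‖x - y‖ + ‖x - y‖) / ‖x‖ := by
        gcongr
        exact (norm_add_le _ _).trans (by gcongr)
    _ = 2 * ‖x - y‖ / ‖x‖ := by rw [two_mul]

theorem norm_normalize_sub_normalize_le (x y : V) :
    ‖normalize x - normalize y‖ ≤ 2 * ‖x - y‖ / max ‖x‖ ‖y‖ := by
  wlog hle : ‖y‖ ≤ ‖x‖ generalizing x y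
  · rw [norm_sub_rev, norm_sub_rev x, max_comm]
    exact this y x (le_of_not_ge hle)
  rcases eq_or_ne x 0 with rfl | hx
  · simp [norm_le_zero_iff.mp (by simpa using hle)]
  · rw [max_eq_left hle]
    exact norm_normalize_sub_normalize_le_div_norm hx y

variable {F : Type*} [NormedAddCommGroup F] [InnerProductSpace ℝ F]

theorem real_inner_div_norm_mul_norm_eq_inner_normalize_div_norm (x y : F) :
    ⟪x, y⟫ / (‖x‖ * ‖y‖) = ⟪normalize x, y⟫ / ‖y‖ := by
  rw [normalize, real_inner_smul_left]
  ring

theorem abs_sub_real_inner_div_norm_mul_norm_le (x y z : F) :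
    |⟪x, z⟫ / (‖x‖ * ‖z‖) - ⟪y, z⟫ / (‖y‖ * ‖z‖)| ≤ ‖normalize x - normalize y‖ := by
  rw [real_inner_div_norm_mul_norm_eq_inner_normalize_div_norm,
    real_inner_div_norm_mul_norm_eq_inner_normalize_div_norm, ← sub_div, ← inner_sub_left]
  exact abs_real_inner_div_norm_le_norm _ z

end NormedSpace

theorem cosine_similarity_stability_general
    {E : Type*} [NormedAddCommGroup E] [InnerProductSpace ℝ E]
    (u₀ u v : E)
    (lam : ℝ) (h : ‖u - u₀‖ ≤ lam) :
    |⟪u₀, v⟫ / (‖u₀‖ * ‖v‖) - ⟪u, v⟫ / (‖u‖ * ‖v‖)| ≤ 2 * lam / max ‖u‖ ‖u₀‖ :=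
  calc |⟪u₀, v⟫ / (‖u₀‖ * ‖v‖) - ⟪u, v⟫ / (‖u‖ * ‖v‖)|
      ≤ ‖NormedSpace.normalize u - NormedSpace.normalize u₀‖ := by
        rw [abs_sub_comm]; exact NormedSpace.abs_sub_real_inner_div_norm_mul_norm_le u u₀ v
    _ ≤ 2 * ‖u - u₀‖ / max ‖u‖ ‖u₀‖ := NormedSpace.norm_normalize_sub_normalize_le u u₀
    _ ≤ 2 * lam / max ‖u‖ ‖u₀‖ := by gcongr

theorem cosine_similarity_stability
    {E : Type*} [NormedAddCommGroup E] [InnerProductSpace ℝ E]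
    (u₀ u v : E) (hu₀ : u₀ ≠ 0) (hu : u ≠ 0) (hv : v ≠ 0)
    (lam : ℝ) (hlam : 0 ≤ lam) (h : ‖u - u₀‖ ≤ lam) :
    |⟪u₀, v⟫ / (‖u₀‖ * ‖v‖) - ⟪u, v⟫ / (‖u‖ * ‖v‖)| ≤ 2 * lam / max ‖u‖ ‖u₀‖ :=
  cosine_similarity_stability_general u₀ u v lam h
end

section
/- Vector Bernstein inequality: Let X₁, …, X_M be independent random vectors taking values in ℝ^d (equivalently, a finite-dimensional real inner product space), each with mean zero, and suppose there exist constants μ > 0 and σ > 0 such that almost surely ‖X_m‖ ≤ μ for every m, and E[‖X_m‖²] ≤ σ² for every m. Let Z = (1/M) Σ_{m=1}^M X_m. Then for every ε with 0 < ε < σ²/μ, P(‖Z‖ ≥ ε) ≤ exp(−Mε²/(8σ²) + 1/4). -/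
/-!
Independence makes the law of `(X₁, …, X_M)` the product of the laws `νₘ`, so it suffices to
study `F x = ‖∑ₘ xₘ‖` under `∏ₘ νₘ`; this function is 1-Lipschitz in each coordinate.
Integrating out one coordinate at a time, each step multiplies the centred moment generating
function of `F` by at most `exp (t² σ²)` as long as `2 |t| mu ≤ 1`: the increment is a centred
variable bounded by `2 mu` whose variance is at most `σ²`, and `exp x ≤ 1 + x + x²` for `x ≤ 1`.
Independent centred vectors are orthogonal in `L²`, so `(E F)² ≤ E F² ≤ M σ²`, and the Chernoff
bound at `t = (Mε - E F) / (2Mσ²)` gives `exp (-(Mε - E F)² / (4Mσ²))`, which is at most the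
claimed bound because `(a - c)² ≥ a² / 2 - c²`.
-/

open MeasureTheory ProbabilityTheory Real Set

theorem Real.exp_le_one_add_add_sq {x : ℝ} (hx : x ≤ 1) : exp x ≤ 1 + x + x ^ 2 := by
  rcases le_or_gt x (-1) with hx' | hx'
  · nlinarith [exp_lt_one_iff.2 (by linarith : x < 0)]
  · have := abs_exp_sub_one_sub_id_le (abs_le.2 ⟨hx'.le, hx⟩)
    linarith [le_abs_self (exp x - 1 - x)]

theorem neg_sub_sq_div_le {a c V : ℝ} (hV : 0 < V) (hc : c ^ 2 ≤ V) :
    -(a - c) ^ 2 / (4 * V) ≤ -a ^ 2 / (8 * V) + 1 / 4 := by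
  rw [div_add' _ _ _ (by positivity), div_le_div_iff₀ (by positivity) (by positivity)]
  nlinarith [sq_nonneg (a - 2 * c)]

theorem integrable_comp_of_ae_abs_sub_le {α : Type*} [MeasurableSpace α] {ν : Measure α}
    [IsFiniteMeasure ν] {f : α → ℝ} (hf : AEStronglyMeasurable f ν) {a C : ℝ}
    (hC : ∀ᵐ x ∂ν, |f x - a| ≤ C) {h : ℝ → ℝ} (hh : Continuous h) :
    Integrable (fun x => h (f x)) ν := by
  obtain ⟨B, hB⟩ := isCompact_Icc.exists_bound_of_continuousOn
    (hh.continuousOn (s := Icc (a - C) (a + C)))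
  refine .of_bound (hh.comp_aestronglyMeasurable hf) B ?_
  filter_upwards [hC] with x hx
  exact hB _ ⟨by linarith [abs_le.1 hx], by linarith [abs_le.1 hx]⟩

theorem sq_integral_le_integral_sq {Ω : Type*} [MeasurableSpace Ω] {μ : Measure Ω}
    [IsProbabilityMeasure μ] {Y : Ω → ℝ} (hY : MemLp Y 2 μ) :
    (∫ ω, Y ω ∂μ) ^ 2 ≤ ∫ ω, Y ω ^ 2 ∂μ := by
  have h := variance_nonneg Y μ
  rw [variance_eq_sub hY] at h
  simpa [sub_nonneg] using h

theorem ProbabilityTheory.mgf_le_exp_mul_integral_sq {Ω : Type*} [MeasurableSpace Ω]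
    {μ : Measure Ω} [IsProbabilityMeasure μ] {Z : Ω → ℝ} (hZ : AEStronglyMeasurable Z μ)
    (hmean : ∫ ω, Z ω ∂μ = 0) {b t : ℝ} (hb : ∀ᵐ ω ∂μ, |Z ω| ≤ b) (htb : |t| * b ≤ 1) :
    mgf Z μ t ≤ exp (t ^ 2 * ∫ ω, Z ω ^ 2 ∂μ) := by
  have hb0 : ∀ᵐ ω ∂μ, |Z ω - 0| ≤ b := by simpa using hb
  have hZ1 : Integrable Z μ := integrable_comp_of_ae_abs_sub_le hZ hb0 continuous_id
  have hZ2 : Integrable (fun ω => Z ω ^ 2) μ :=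
    integrable_comp_of_ae_abs_sub_le hZ hb0 (continuous_pow 2)
  have hexp : Integrable (fun ω => exp (t * Z ω)) μ :=
    integrable_comp_of_ae_abs_sub_le hZ hb0 (continuous_const.mul continuous_id).rexp
  have hlin : Integrable (fun ω => 1 + t * Z ω) μ := (integrable_const 1).add (hZ1.const_mul t)
  have hpoly : Integrable (fun ω => 1 + t * Z ω + t ^ 2 * Z ω ^ 2) μ :=
    hlin.add (hZ2.const_mul _)
  have hpoint : ∀ᵐ ω ∂μ, exp (t * Z ω) ≤ 1 + t * Z ω + t ^ 2 * Z ω ^ 2 := by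
    filter_upwards [hb] with ω hω
    have htZ : t * Z ω ≤ 1 := calc
      t * Z ω ≤ |t| * |Z ω| := by rw [← abs_mul]; exact le_abs_self _
      _ ≤ |t| * b := by gcongr
      _ ≤ 1 := htb
    simpa [mul_pow] using exp_le_one_add_add_sq htZ
  calc mgf Z μ t ≤ ∫ ω, (1 + t * Z ω + t ^ 2 * Z ω ^ 2) ∂μ := integral_mono_ae hexp hpoly hpoint
    _ = 1 + t ^ 2 * ∫ ω, Z ω ^ 2 ∂μ := by
      rw [integral_add hlin (hZ2.const_mul _),
        integral_add (integrable_const 1) (hZ1.const_mul t), integral_const_mul,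
        integral_const_mul, hmean]
      simp
    _ ≤ exp (t ^ 2 * ∫ ω, Z ω ^ 2 ∂μ) := by linarith [add_one_le_exp (t ^ 2 * ∫ ω, Z ω ^ 2 ∂μ)]

theorem ProbabilityTheory.measureReal_ge_le_exp_of_mgf_le {Ω : Type*} [MeasurableSpace Ω]
    {μ : Measure Ω} [IsFiniteMeasure μ] {Y : Ω → ℝ} {V L : ℝ} (hV : 0 < V)
    (hint : ∀ t ∈ Icc 0 L, Integrable (fun ω => exp (t * Y ω)) μ)
    (hmgf : ∀ t ∈ Icc 0 L, mgf Y μ t ≤ exp (t ^ 2 * V)) {s : ℝ} (hs : 0 ≤ s)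
    (hsL : s ≤ 2 * V * L) :
    μ.real {ω | s ≤ Y ω} ≤ exp (-s ^ 2 / (4 * V)) := by
  have ht : s / (2 * V) ∈ Icc 0 L :=
    ⟨by positivity, by rw [div_le_iff₀ (by positivity)]; linarith⟩
  calc μ.real {ω | s ≤ Y ω} ≤ exp (-(s / (2 * V)) * s) * mgf Y μ (s / (2 * V)) :=
        measure_ge_le_exp_mul_mgf s ht.1 (hint _ ht)
    _ ≤ exp (-(s / (2 * V)) * s) * exp ((s / (2 * V)) ^ 2 * V) := by gcongr; exact hmgf _ ht
    _ = exp (-s ^ 2 / (4 * V)) := by rw [← exp_add]; congr 1; field_simp; ring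

theorem LipschitzWith.variance_le_integral_norm_sq {E : Type*} [NormedAddCommGroup E]
    [MeasurableSpace E] [OpensMeasurableSpace E] {ν : Measure E} [IsProbabilityMeasure ν]
    {φ : E → ℝ} (hφ : LipschitzWith 1 φ) (hint : Integrable (fun y => ‖y‖ ^ 2) ν) :
    Var[φ; ν] ≤ ∫ y, ‖y‖ ^ 2 ∂ν := by
  have hm : AEStronglyMeasurable φ ν := hφ.continuous.aestronglyMeasurable
  rw [← variance_sub_const hm (φ 0)]
  refine (variance_le_expectation_sq (hm.sub aestronglyMeasurable_const)).trans
    (integral_mono_of_nonneg (.of_forall fun y => sq_nonneg _) hint (.of_forall fun y => ?_))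
  have h : |φ y - φ 0| ≤ ‖y‖ := by simpa [Real.dist_eq] using hφ.dist_le_mul y 0
  calc (φ y - φ 0) ^ 2 = |φ y - φ 0| ^ 2 := (sq_abs _).symm
    _ ≤ ‖y‖ ^ 2 := by gcongr

theorem integral_pi_fin_succ {E : Type*} [MeasurableSpace E] {n : ℕ}
    (ν : Fin (n + 1) → Measure E) [∀ i, SigmaFinite (ν i)]
    {q : (Fin (n + 1) → E) → ℝ} (hq : Integrable q (Measure.pi ν)) :
    ∫ x, q x ∂Measure.pi ν
      = ∫ x, ∫ y, q (Fin.cons y x) ∂ν 0 ∂Measure.pi fun j => ν j.succ := by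
  have hmp := (measurePreserving_piFinSuccAbove ν 0).symm
  have hq' := (hmp.integrable_comp_emb (MeasurableEquiv.measurableEmbedding _)).2 hq
  rw [← hmp.integral_comp']
  simp only [Function.comp_def, MeasurableEquiv.piFinSuccAbove_symm_apply, Fin.insertNthEquiv,
    Fin.insertNth_zero, Equiv.coe_fn_mk, Fin.zero_succAbove, cast_eq] at hq' ⊢
  exact integral_prod_symm _ hq'

section Tensorization

variable {E : Type*} [NormedAddCommGroup E] {n : ℕ} {mu sigma t : ℝ}

theorem lipschitzWith_of_abs_sub_le_sum_norm {f : (Fin n → E) → ℝ}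
    (hf : ∀ x y, |f x - f y| ≤ ∑ i, ‖x i - y i‖) : LipschitzWith n f :=
  LipschitzWith.of_dist_le_mul fun x y => by
    rw [Real.dist_eq]
    refine (hf x y).trans ?_
    calc ∑ i, ‖x i - y i‖ ≤ ∑ _i : Fin n, dist x y :=
          Finset.sum_le_sum fun i _ => by rw [← dist_eq_norm]; exact dist_le_pi_dist x y i
      _ = n * dist x y := by simp

theorem abs_sub_fin_cons_le {f : (Fin (n + 1) → E) → ℝ}
    (hf : ∀ x y, |f x - f y| ≤ ∑ i, ‖x i - y i‖) (y y' : E) (x x' : Fin n → E) :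
    |f (Fin.cons y x) - f (Fin.cons y' x')| ≤ ‖y - y'‖ + ∑ j, ‖x j - x' j‖ := by
  simpa [Fin.sum_univ_succ] using hf (Fin.cons y x) (Fin.cons y' x')

theorem lipschitzWith_fin_cons {f : (Fin (n + 1) → E) → ℝ}
    (hf : ∀ x y, |f x - f y| ≤ ∑ i, ‖x i - y i‖) (x : Fin n → E) :
    LipschitzWith 1 fun y => f (Fin.cons y x) :=
  LipschitzWith.of_dist_le_mul fun y y' => by
    simpa [Real.dist_eq, dist_eq_norm] using abs_sub_fin_cons_le hf y y' x x

variable [MeasurableSpace E] [BorelSpace E]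

theorem LipschitzWith.integrable_of_ae_norm_le {ν : Measure E} [IsFiniteMeasure ν] {K : NNReal}
    {φ : E → ℝ} (hφ : LipschitzWith K φ) (hbd : ∀ᵐ y ∂ν, ‖y‖ ≤ mu) : Integrable φ ν := by
  refine integrable_comp_of_ae_abs_sub_le hφ.continuous.aestronglyMeasurable (a := φ 0)
    (C := K * mu) ?_ continuous_id
  filter_upwards [hbd] with y hy
  calc |φ y - φ 0| ≤ K * ‖y - 0‖ := by simpa [Real.dist_eq, dist_eq_norm] using hφ.dist_le_mul y 0
    _ ≤ K * mu := by rw [sub_zero]; gcongr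

theorem abs_integral_fin_cons_sub_le {ν₀ : Measure E} [IsProbabilityMeasure ν₀]
    (hbd : ∀ᵐ y ∂ν₀, ‖y‖ ≤ mu) {f : (Fin (n + 1) → E) → ℝ}
    (hf : ∀ x y, |f x - f y| ≤ ∑ i, ‖x i - y i‖) (x x' : Fin n → E) :
    |∫ y, f (Fin.cons y x) ∂ν₀ - ∫ y, f (Fin.cons y x') ∂ν₀| ≤ ∑ j, ‖x j - x' j‖ := by
  rw [← integral_sub ((lipschitzWith_fin_cons hf x).integrable_of_ae_norm_le hbd)
    ((lipschitzWith_fin_cons hf x').integrable_of_ae_norm_le hbd), ← Real.norm_eq_abs]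
  refine (norm_integral_le_of_norm_le_const (C := ∑ j, ‖x j - x' j‖)
    (.of_forall fun y => ?_)).trans (by simp)
  simpa using abs_sub_fin_cons_le hf y y x x'

theorem LipschitzWith.mgf_sub_integral_le {ν : Measure E} [IsProbabilityMeasure ν] {φ : E → ℝ}
    (hφ : LipschitzWith 1 φ) (hbd : ∀ᵐ y ∂ν, ‖y‖ ≤ mu) (hvar : ∫ y, ‖y‖ ^ 2 ∂ν ≤ sigma ^ 2)
    (ht : 2 * |t| * mu ≤ 1) :
    mgf (fun y => φ y - ∫ z, φ z ∂ν) ν t ≤ exp (t ^ 2 * sigma ^ 2) := by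
  have hm : AEStronglyMeasurable φ ν := hφ.continuous.aestronglyMeasurable
  have hint : Integrable φ ν := hφ.integrable_of_ae_norm_le hbd
  have hcent : ∀ᵐ y ∂ν, |φ y - ∫ z, φ z ∂ν| ≤ 2 * mu := by
    filter_upwards [hbd] with y hy
    have hsub : φ y - ∫ z, φ z ∂ν = ∫ z, (φ y - φ z) ∂ν := by
      rw [integral_sub (integrable_const _) hint]; simp
    rw [hsub, ← Real.norm_eq_abs]
    refine (norm_integral_le_of_norm_le_const (C := 2 * mu) ?_).trans (by simp)
    filter_upwards [hbd] with z hz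
    have hyz := hφ.dist_le_mul y z
    simp only [dist_eq_norm, NNReal.coe_one, one_mul] at hyz
    linarith [_root_.norm_sub_le y z]
  have hnorm_sq : Integrable (fun y => ‖y‖ ^ 2) ν :=
    integrable_comp_of_ae_abs_sub_le continuous_norm.aestronglyMeasurable (a := 0) (C := mu)
      (by simpa using hbd) (continuous_pow 2)
  calc mgf (fun y => φ y - ∫ z, φ z ∂ν) ν t
      ≤ exp (t ^ 2 * ∫ y, (φ y - ∫ z, φ z ∂ν) ^ 2 ∂ν) :=
        mgf_le_exp_mul_integral_sq (Z := fun y => φ y - ∫ z, φ z ∂ν)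
          (hm.sub aestronglyMeasurable_const)
          (by rw [integral_sub hint (integrable_const _)]; simp) hcent (by linarith)
    _ ≤ exp (t ^ 2 * sigma ^ 2) := by
      gcongr
      rw [← variance_eq_integral hm.aemeasurable]
      exact (hφ.variance_le_integral_norm_sq hnorm_sq).trans hvar

variable [SecondCountableTopology E]

theorem integrable_pi_comp_of_abs_sub_le_sum_norm {ν : Fin n → Measure E}
    [∀ i, IsProbabilityMeasure (ν i)] (hbd : ∀ i, ∀ᵐ y ∂ν i, ‖y‖ ≤ mu)
    {f : (Fin n → E) → ℝ} (hf : ∀ x y, |f x - f y| ≤ ∑ i, ‖x i - y i‖) {h : ℝ → ℝ}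
    (hh : Continuous h) : Integrable (fun x => h (f x)) (Measure.pi ν) := by
  refine integrable_comp_of_ae_abs_sub_le
    (lipschitzWith_of_abs_sub_le_sum_norm hf).continuous.aestronglyMeasurable
    (a := f 0) (C := n * mu) ?_ hh
  filter_upwards [Filter.eventually_all.2 fun i => Measure.tendsto_eval_ae_ae.eventually (hbd i)]
    with x hx
  calc |f x - f 0| ≤ ∑ i, ‖x i - (0 : Fin n → E) i‖ := hf x 0
    _ ≤ ∑ _i : Fin n, mu := Finset.sum_le_sum fun i _ => by simpa using hx i
    _ = n * mu := by simp

theorem mgf_sub_integral_pi_le {ν : Fin n → Measure E} [∀ i, IsProbabilityMeasure (ν i)]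
    (hbd : ∀ i, ∀ᵐ y ∂ν i, ‖y‖ ≤ mu) (hvar : ∀ i, ∫ y, ‖y‖ ^ 2 ∂ν i ≤ sigma ^ 2)
    (ht : 2 * |t| * mu ≤ 1) {f : (Fin n → E) → ℝ}
    (hf : ∀ x y, |f x - f y| ≤ ∑ i, ‖x i - y i‖) :
    mgf (fun x => f x - ∫ z, f z ∂Measure.pi ν) (Measure.pi ν) t
      ≤ exp (t ^ 2 * (n * sigma ^ 2)) := by
  induction n with
  | zero =>
    have hconst : ∀ x, f x - ∫ z, f z ∂Measure.pi ν = 0 := fun x => by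
      rw [sub_eq_zero, integral_congr_ae (.of_forall fun z => congrArg f (Subsingleton.elim z x))]
      simp
    simp [mgf, hconst]
  | succ n ih =>
    set c := ∫ z, f z ∂Measure.pi ν
    set g : (Fin n → E) → ℝ := fun x => ∫ y, f (Fin.cons y x) ∂ν 0
    have hg : ∀ x x', |g x - g x'| ≤ ∑ j, ‖x j - x' j‖ :=
      abs_integral_fin_cons_sub_le (hbd 0) hf
    have hc : c = ∫ x, g x ∂Measure.pi fun j => ν j.succ :=
      integral_pi_fin_succ ν (integrable_pi_comp_of_abs_sub_le_sum_norm hbd hf continuous_id)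
    calc mgf (fun x => f x - c) (Measure.pi ν) t
        = ∫ x, ∫ y, exp (t * (f (Fin.cons y x) - c)) ∂ν 0 ∂Measure.pi fun j => ν j.succ :=
          integral_pi_fin_succ ν (q := fun x => exp (t * (f x - c)))
            (integrable_pi_comp_of_abs_sub_le_sum_norm hbd hf (h := fun s => exp (t * (s - c)))
              (by fun_prop))
      _ = ∫ x, exp (t * (g x - c)) * mgf (fun y => f (Fin.cons y x) - g x) (ν 0) t
            ∂Measure.pi fun j => ν j.succ := by
          congr 1; ext x
          rw [mgf, ← integral_const_mul]
          congr 1; ext y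
          rw [← exp_add]; ring_nf
      _ ≤ ∫ x, exp (t * (g x - c)) * exp (t ^ 2 * sigma ^ 2) ∂Measure.pi fun j => ν j.succ :=
          integral_mono_of_nonneg (.of_forall fun x => mul_nonneg (exp_nonneg _) mgf_nonneg)
            ((integrable_pi_comp_of_abs_sub_le_sum_norm (fun j => hbd j.succ) hg
              (h := fun s => exp (t * (s - c))) (by fun_prop)).mul_const _)
            (.of_forall fun x => mul_le_mul_of_nonneg_left
              ((lipschitzWith_fin_cons hf x).mgf_sub_integral_le (hbd 0) (hvar 0) ht) (exp_nonneg _))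
      _ = mgf (fun x => g x - c) (Measure.pi fun j => ν j.succ) t * exp (t ^ 2 * sigma ^ 2) :=
          integral_mul_const _ _
      _ ≤ exp (t ^ 2 * (n * sigma ^ 2)) * exp (t ^ 2 * sigma ^ 2) := by
          rw [hc]; gcongr; exact ih (fun j => hbd j.succ) (fun j => hvar j.succ) hg
      _ = exp (t ^ 2 * ((n + 1 : ℕ) * sigma ^ 2)) := by rw [← exp_add]; push_cast; ring_nf

end Tensorization

section InnerProductSpace

variable {F : Type*} [NormedAddCommGroup F] [InnerProductSpace ℝ F] [CompleteSpace F]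
  [MeasurableSpace F] [BorelSpace F]

theorem integral_norm_sum_sq_eq_sum {Ω ι : Type*} [MeasurableSpace Ω] {μ : Measure Ω}
    [IsFiniteMeasure μ] [Fintype ι] {X : ι → Ω → F} (hX : ∀ i, MemLp (X i) 2 μ)
    (hindep : Pairwise fun i j => IndepFun (X i) (X j) μ) (hmean : ∀ i, ∫ ω, X i ω ∂μ = 0) :
    ∫ ω, ‖∑ i, X i ω‖ ^ 2 ∂μ = ∑ i, ∫ ω, ‖X i ω‖ ^ 2 ∂μ := by
  classical
  have hsq : ∀ i, Integrable (fun ω => ‖X i ω‖ ^ 2) μ := fun i => (hX i).integrable_norm_pow'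
  have hinner : ∀ i j, Integrable (fun ω => inner ℝ (X i ω) (X j ω)) μ := fun i j =>
    ((hsq i).add (hsq j)).mono' ((hX i).1.inner (hX j).1) (.of_forall fun ω => by
      rw [Real.norm_eq_abs, Pi.add_apply]
      nlinarith [abs_real_inner_le_norm (X i ω) (X j ω), norm_nonneg (X i ω),
        norm_nonneg (X j ω)])
  have horth : ∀ i j, i ≠ j → ∫ ω, inner ℝ (X i ω) (X j ω) ∂μ = 0 := fun i j hij => by
    have h := (hindep hij).integral_bilin ((hX i).integrable one_le_two)
      ((hX j).integrable one_le_two) (innerSL ℝ)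
    rw [hmean, map_zero, zero_apply] at h
    exact h
  simp_rw [← real_inner_self_eq_norm_sq, sum_inner, inner_sum]
  rw [integral_finsetSum _ fun i _ => integrable_finsetSum _ fun j _ => hinner i j]
  refine Finset.sum_congr rfl fun i _ => ?_
  rw [integral_finsetSum _ fun j _ => hinner i j,
    Finset.sum_eq_single i (fun j _ hji => horth i j hji.symm) (by simp)]

variable [SecondCountableTopology F] {n : ℕ} {ν : Fin n → Measure F}
  [∀ i, IsProbabilityMeasure (ν i)] {sigma : ℝ}

theorem sq_integral_norm_sum_pi_le (hL2 : ∀ i, MemLp id 2 (ν i))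
    (hmean : ∀ i, ∫ y, y ∂ν i = 0) (hvar : ∀ i, ∫ y, ‖y‖ ^ 2 ∂ν i ≤ sigma ^ 2) :
    (∫ x, ‖∑ i, x i‖ ∂Measure.pi ν) ^ 2 ≤ n * sigma ^ 2 := by
  have hX : ∀ i, MemLp (fun x : Fin n → F => x i) 2 (Measure.pi ν) := fun i =>
    (hL2 i).comp_measurePreserving (measurePreserving_eval ν i)
  calc (∫ x, ‖∑ i, x i‖ ∂Measure.pi ν) ^ 2 ≤ ∫ x, ‖∑ i, x i‖ ^ 2 ∂Measure.pi ν :=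
        sq_integral_le_integral_sq (memLp_finsetSum Finset.univ fun i _ => hX i).norm
    _ = ∑ i, ∫ x, ‖x i‖ ^ 2 ∂Measure.pi ν :=
        integral_norm_sum_sq_eq_sum hX
          (fun i j hij => (iIndepFun_pi (X := fun _ => id) fun _ => aemeasurable_id).indepFun hij)
          (fun i => by rw [integral_eval]; exact hmean i)
    _ = ∑ i, ∫ y, ‖y‖ ^ 2 ∂ν i := by
        congr 1; ext i; exact integral_comp_eval (continuous_norm.pow 2).aestronglyMeasurable
    _ ≤ ∑ _i : Fin n, sigma ^ 2 := Finset.sum_le_sum fun i _ => hvar i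
    _ = n * sigma ^ 2 := by simp

theorem measure_pi_norm_sum_ge_le_exp (hn : 0 < n) {mu ε : ℝ}
    (hbd : ∀ i, ∀ᵐ y ∂ν i, ‖y‖ ≤ mu) (hmean : ∀ i, ∫ y, y ∂ν i = 0)
    (hvar : ∀ i, ∫ y, ‖y‖ ^ 2 ∂ν i ≤ sigma ^ 2) (hmu : 0 < mu) (hsigma : 0 < sigma) (hε : 0 < ε)
    (hεmu : ε < sigma ^ 2 / mu) :
    Measure.pi ν {x | n * ε ≤ ‖∑ i, x i‖}
      ≤ ENNReal.ofReal (exp (-(n * ε ^ 2) / (8 * sigma ^ 2) + 1 / 4)) := by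
  set f : (Fin n → F) → ℝ := fun x => ‖∑ i, x i‖
  have hf : ∀ x y, |f x - f y| ≤ ∑ i, ‖x i - y i‖ := fun x y =>
    (abs_norm_sub_norm_le _ _).trans (by rw [← Finset.sum_sub_distrib]; exact norm_sum_le _ _)
  have hexponent : -(n * ε ^ 2) / (8 * sigma ^ 2) + 1 / 4
      = -(n * ε) ^ 2 / (8 * (n * sigma ^ 2)) + 1 / 4 := by
    field_simp
  set c := ∫ x, f x ∂Measure.pi ν
  set V : ℝ := n * sigma ^ 2
  set a : ℝ := n * ε
  have hV : 0 < V := by positivity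
  have hc : c ^ 2 ≤ V :=
    sq_integral_norm_sum_pi_le (fun i => .of_bound aestronglyMeasurable_id mu (hbd i)) hmean hvar
  rw [hexponent, ← ofReal_measureReal]
  refine ENNReal.ofReal_le_ofReal ?_
  rcases le_or_gt a c with hac | hca
  · have ha2 : a ^ 2 ≤ V := le_trans (by gcongr) hc
    have : a ^ 2 / (8 * V) ≤ 1 / 4 := by rw [div_le_iff₀ (by positivity)]; linarith
    refine measureReal_le_one.trans (one_le_exp ?_)
    rw [neg_div]
    linarith
  have haL : a ≤ 2 * V * (1 / (2 * mu)) := by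
    have := mul_le_mul_of_nonneg_left ((lt_div_iff₀ hmu).1 hεmu).le (Nat.cast_nonneg (α := ℝ) n)
    rw [show 2 * V * (1 / (2 * mu)) = V / mu by field_simp, le_div_iff₀ hmu]
    linarith
  have hc0 : 0 ≤ c := integral_nonneg fun x => norm_nonneg _
  have hchernoff := measureReal_ge_le_exp_of_mgf_le (Y := fun x => f x - c) (L := 1 / (2 * mu))
    (s := a - c) hV
    (fun t _ => integrable_pi_comp_of_abs_sub_le_sum_norm hbd hf
      (h := fun s => exp (t * (s - c))) (by fun_prop))
    (fun t ht => mgf_sub_integral_pi_le hbd hvar (by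
      have := (le_div_iff₀ (by positivity)).1 ht.2
      rw [abs_of_nonneg ht.1]; linarith) hf)
    (sub_nonneg.2 hca.le) (by linarith)
  calc (Measure.pi ν).real {x | a ≤ f x} = (Measure.pi ν).real {x | a - c ≤ f x - c} := by
        simp_rw [sub_le_sub_iff_right]
    _ ≤ exp (-(a - c) ^ 2 / (4 * V)) := hchernoff
    _ ≤ exp (-a ^ 2 / (8 * V) + 1 / 4) := exp_le_exp.2 (neg_sub_sq_div_le hV hc)

end InnerProductSpace

theorem vector_bernstein_inequality
    {Ω : Type*} [MeasurableSpace Ω] (μ : Measure Ω) [IsProbabilityMeasure μ]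
    (d M : ℕ) (hM : 0 < M)
    (X : Fin M → Ω → EuclideanSpace ℝ (Fin d))
    (hmeas : ∀ m, Measurable (X m))
    (hindep : iIndepFun X μ)
    (hmean : ∀ m, ∫ ω, X m ω ∂μ = 0)
    (mu sigma : ℝ) (hmu : 0 < mu) (hsigma : 0 < sigma)
    (hbound : ∀ m, ∀ᵐ ω ∂μ, ‖X m ω‖ ≤ mu)
    (hvar : ∀ m, ∫ ω, ‖X m ω‖ ^ 2 ∂μ ≤ sigma ^ 2)
    (ε : ℝ) (hε : 0 < ε) (hεmu : ε < sigma ^ 2 / mu) :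
    μ {ω | ε ≤ ‖(M : ℝ)⁻¹ • (∑ m, X m ω)‖} ≤
      ENNReal.ofReal (Real.exp (-(M * ε ^ 2) / (8 * sigma ^ 2) + 1 / 4)) := by
  have hX : ∀ m, AEMeasurable (X m) μ := fun m => (hmeas m).aemeasurable
  have : ∀ m, IsProbabilityMeasure (μ.map (X m)) := fun m => Measure.isProbabilityMeasure_map (hX m)
  have hevent : {ω | ε ≤ ‖(M : ℝ)⁻¹ • (∑ m, X m ω)‖}
      = (fun ω m => X m ω) ⁻¹' {x | M * ε ≤ ‖∑ m, x m‖} := by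
    ext ω
    simp [norm_smul, le_inv_mul_iff₀ (Nat.cast_pos.2 hM : (0 : ℝ) < M)]
  rw [hevent, ← Measure.map_apply (measurable_pi_lambda _ hmeas)
    (measurableSet_le measurable_const (by fun_prop)), hindep.map_fun_eq_pi_map hX]
  exact measure_pi_norm_sum_ge_le_exp hM
    (fun m => (ae_map_iff (hX m) (measurableSet_le measurable_norm measurable_const)).2 (hbound m))
    (fun m => (integral_map (hX m) aestronglyMeasurable_id).trans (hmean m))
    (fun m => by rw [integral_map (hX m) (by fun_prop)]; exact hvar m)
    hmu hsigma hε hεmu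
end
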